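/- arXiv:1902.06780 — 2 statements merged into one kernel-verified Lean document; each statement's English description precedes it below -/
import Mathlib

section
/- If σ-algebras 𝒴_n → 𝒴 in L¹ and random variables Z_n → Z in L¹ (with Z ∈ L¹(𝒴)), then E[Z_n | 𝒴_n] → E[Z | 𝒴] = Z in L¹. -/
open MeasureTheory Filter
open scoped ENNReal Topology

section CondExpApprox

variable {α E : Type*} {m₀ : MeasurableSpace α} {μ : Measure α}
  [NormedAddCommGroup E] [NormedSpace ℝ E] [CompleteSpace E] {p : ℝ≥0∞}

theorem eLpNorm_condExp_sub_le (m : MeasurableSpace α) (hp : 1 ≤ p) {f g : α → E}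
    (hf : Integrable f μ) (hg : Integrable g μ) :
    eLpNorm (μ[f | m] - g) p μ ≤ eLpNorm (f - g) p μ + eLpNorm (μ[g | m] - g) p μ := by
  have hsplit : μ[f | m] - g =ᵐ[μ] μ[f - g | m] + (μ[g | m] - g) := by
    filter_upwards [condExp_sub hf hg m] with x hx
    simp only [Pi.add_apply, Pi.sub_apply, hx]
    abel
  calc eLpNorm (μ[f | m] - g) p μ
      = eLpNorm (μ[f - g | m] + (μ[g | m] - g)) p μ := eLpNorm_congr_ae hsplit
    _ ≤ eLpNorm (μ[f - g | m]) p μ + eLpNorm (μ[g | m] - g) p μ :=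
        eLpNorm_add_le integrable_condExp.aestronglyMeasurable
          (integrable_condExp.aestronglyMeasurable.sub hg.aestronglyMeasurable) hp
    _ ≤ eLpNorm (f - g) p μ + eLpNorm (μ[g | m] - g) p μ := by
        gcongr
        exact eLpNorm_condExp_le_eLpNorm _ hp

theorem tendsto_eLpNorm_condExp_sub {ι : Type*} {l : Filter ι} {m : ι → MeasurableSpace α}
    (hp : 1 ≤ p) {f : ι → α → E} {g : α → E} (hf : ∀ i, Integrable (f i) μ)
    (hg : Integrable g μ) (hfg : Tendsto (fun i => eLpNorm (f i - g) p μ) l (𝓝 0))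
    (hmg : Tendsto (fun i => eLpNorm (μ[g | m i] - g) p μ) l (𝓝 0)) :
    Tendsto (fun i => eLpNorm (μ[f i | m i] - g) p μ) l (𝓝 0) := by
  refine tendsto_of_tendsto_of_tendsto_of_le_of_le tendsto_const_nhds ?_ (fun _ => zero_le)
    (fun i => eLpNorm_condExp_sub_le (m i) hp (hf i) hg)
  simpa using hfg.add hmg

end CondExpApprox

theorem stmt9_general {Ω : Type*} {mΩ : MeasurableSpace Ω} (μ : Measure Ω)
    (𝒴n : ℕ → MeasurableSpace Ω)
    (𝒴 : MeasurableSpace Ω)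
    (hconv : ∀ Y : Ω → ℝ, StronglyMeasurable[𝒴] Y → Integrable Y μ →
      Tendsto (fun n => eLpNorm ((μ[Y | 𝒴n n]) - Y) 1 μ) atTop (nhds 0))
    (Zn : ℕ → Ω → ℝ) (Z : Ω → ℝ)
    (hZmeas : StronglyMeasurable[𝒴] Z) (hZint : Integrable Z μ)
    (hZnint : ∀ n, Integrable (Zn n) μ)
    (hZconv : Tendsto (fun n => eLpNorm (Zn n - Z) 1 μ) atTop (nhds 0)) :
    Tendsto (fun n => eLpNorm ((μ[Zn n | 𝒴n n]) - Z) 1 μ) atTop (nhds 0) :=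
  tendsto_eLpNorm_condExp_sub le_rfl hZnint hZint hZconv (hconv Z hZmeas hZint)

/-- If σ-algebras `𝒴ₙ → 𝒴` in `L¹` and random variables `Zₙ → Z`
in `L¹` with `Z ∈ L¹(𝒴)`, then `E[Zₙ|𝒴ₙ] → E[Z|𝒴] = Z` in `L¹`. -/
theorem stmt9 {Ω : Type*} {mΩ : MeasurableSpace Ω} (μ : Measure Ω) [IsProbabilityMeasure μ]
    (𝒴n : ℕ → MeasurableSpace Ω) (h𝒴n : ∀ n, 𝒴n n ≤ mΩ)
    (𝒴 : MeasurableSpace Ω) (h𝒴 : 𝒴 ≤ mΩ)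
    (hconv : ∀ Y : Ω → ℝ, StronglyMeasurable[𝒴] Y → Integrable Y μ →
      Tendsto (fun n => eLpNorm ((μ[Y | 𝒴n n]) - Y) 1 μ) atTop (nhds 0))
    (Zn : ℕ → Ω → ℝ) (Z : Ω → ℝ)
    (hZmeas : StronglyMeasurable[𝒴] Z) (hZint : Integrable Z μ)
    (hZnint : ∀ n, Integrable (Zn n) μ)
    (hZconv : Tendsto (fun n => eLpNorm (Zn n - Z) 1 μ) atTop (nhds 0)) :
    Tendsto (fun n => eLpNorm ((μ[Zn n | 𝒴n n]) - Z) 1 μ) atTop (nhds 0) :=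
  stmt9_general (mΩ := mΩ) μ 𝒴n 𝒴 hconv Zn Z hZmeas hZint hZnint hZconv
end

section
/- Let X be a càdlàg process such that ℙ(ΔX_t ≠ 0) = 0 for every fixed t, and let X^n be the discretization X^n_t = Σ_i X_{t_i^n} 1_{[t_i^n, t_{i+1}^n)}(t) along a refining sequence of subdivisions with mesh → 0. Then X^n_t → X_{t⁻} = X_t almost surely for each fixed t, and consequently the natural filtrations satisfy ℋ^n_{t⁻} → ℋ_{t⁻} in L² (X is of class 𝕏). -/
open MeasureTheory Filter Set
open scoped ENNReal Topology

/-- The natural σ-algebra of a real process strictly before time `t`. -/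
def naturalσlt {Ω : Type*} (X : ℝ → Ω → ℝ) (t : ℝ) : MeasurableSpace Ω :=
  ⨆ s ∈ Set.Ico (0 : ℝ) t, MeasurableSpace.comap (fun ω => X s ω) inferInstance

/-!
For `s < T`, `Xⁿ_s` is `X` at the left end of the cell of `πⁿ` containing `s`; these left ends
increase to `s` as the mesh vanishes, so `Xⁿ_s → X_{s⁻}`, which is `X_s` a.s. since `s` is not a
fixed time of discontinuity.

Refinement makes `ℋⁿ_{t⁻}` increase in `n`, and right continuity recovers each `X_s`, `s < t`, as
the limit of `X` at the right ends of the cells containing `s`, which are partition points before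
`t`; hence `⨆ n, ℋⁿ_{t⁻} = ℋ_{t⁻}`. Lévy's upward theorem then holds in `L²`: the martingale
`𝔼[Y | ℋⁿ_{t⁻}]` converges a.e. to `Y`, so Fatou and the contraction property give
`‖𝔼[Y | ℋⁿ_{t⁻}]‖₂ → ‖Y‖₂`, and Pythagoras turns this into `‖𝔼[Y | ℋⁿ_{t⁻}] - Y‖₂ → 0`.
-/

section LevyL2

variable {Ω : Type*} {m0 : MeasurableSpace Ω} {μ : Measure Ω} [IsFiniteMeasure μ] {Y : Ω → ℝ}

theorem eLpNorm_condExp_sub_sq_add_sq {m : MeasurableSpace Ω} (hm : m ≤ m0) (hY : MemLp Y 2 μ) :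
    eLpNorm (μ[Y | m] - Y) 2 μ ^ 2 + eLpNorm (μ[Y | m]) 2 μ ^ 2 = eLpNorm Y 2 μ ^ 2 := by
  set f : Lp ℝ 2 μ := hY.toLp Y
  set g : Lp ℝ 2 μ := (condExpL2 ℝ ℝ hm f : Lp ℝ 2 μ)
  have hg : g =ᵐ[μ] μ[Y | m] := hY.condExpL2_ae_eq_condExp hm
  have horth : inner ℝ (f - g) g = 0 := by
    have : Fact (m ≤ m0) := ⟨hm⟩
    exact Submodule.starProjection_inner_eq_zero f g (condExpL2 ℝ ℝ hm f).2
  have hpyth : ‖f‖ * ‖f‖ = ‖g - f‖ * ‖g - f‖ + ‖g‖ * ‖g‖ := by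
    simpa [norm_sub_rev g f] using norm_add_sq_eq_norm_sq_add_norm_sq_real horth
  have hdiff : eLpNorm (μ[Y | m] - Y) 2 μ = ‖g - f‖ₑ := by
    rw [Lp.enorm_def]
    refine eLpNorm_congr_ae ?_
    filter_upwards [hg, hY.coeFn_toLp, Lp.coeFn_sub g f] with ω h1 h2 h3
    rw [Pi.sub_apply, ← h1, ← h2, ← Pi.sub_apply, ← h3]
  have hcond : eLpNorm (μ[Y | m]) 2 μ = ‖g‖ₑ := by
    rw [Lp.enorm_def]; exact eLpNorm_congr_ae hg.symm
  have hY' : eLpNorm Y 2 μ = ‖f‖ₑ := by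
    rw [Lp.enorm_def]; exact eLpNorm_congr_ae hY.coeFn_toLp.symm
  rw [hdiff, hcond, hY', ← ofReal_norm, ← ofReal_norm, ← ofReal_norm,
    sq, sq, sq, ← ENNReal.ofReal_mul (norm_nonneg _), ← ENNReal.ofReal_mul (norm_nonneg _),
    ← ENNReal.ofReal_mul (norm_nonneg _), ← ENNReal.ofReal_add (by positivity) (by positivity),
    hpyth]

theorem tendsto_eLpNorm_two_condExp_sub (ℱ : Filtration ℕ m0)
    (hYm : StronglyMeasurable[⨆ n, ℱ n] Y) (hY : MemLp Y 2 μ) :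
    Tendsto (fun n => eLpNorm (μ[Y | ℱ n] - Y) 2 μ) atTop (𝓝 0) := by
  have hle : ∀ n, eLpNorm (μ[Y | ℱ n]) 2 μ ≤ eLpNorm Y 2 μ :=
    fun n => eLpNorm_condExp_le_eLpNorm Y one_le_two
  have hfatou : eLpNorm Y 2 μ ≤ liminf (fun n => eLpNorm (μ[Y | ℱ n]) 2 μ) atTop :=
    Lp.eLpNorm_lim_le_liminf_eLpNorm
      (fun n => (stronglyMeasurable_condExp.mono (ℱ.le n)).aestronglyMeasurable) Y
      ((hY.integrable one_le_two).tendsto_ae_condExp hYm)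
  have hnorm : Tendsto (fun n => eLpNorm (μ[Y | ℱ n]) 2 μ ^ 2) atTop (𝓝 (eLpNorm Y 2 μ ^ 2)) :=
    ENNReal.Tendsto.pow
      (tendsto_of_le_liminf_of_limsup_le hfatou (limsup_le_of_le (h := .of_forall hle)))
  have hsq : Tendsto (fun n => eLpNorm (μ[Y | ℱ n] - Y) 2 μ ^ 2) atTop (𝓝 0) := by
    have hYtop : eLpNorm Y 2 μ ^ 2 ≠ ∞ := ENNReal.pow_ne_top hY.2.ne
    have := ENNReal.Tendsto.sub tendsto_const_nhds hnorm (.inl hYtop)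
    rw [tsub_self] at this
    refine this.congr fun n => (ENNReal.eq_sub_of_add_eq ?_ ?_).symm
    · exact ne_top_of_le_ne_top hYtop (pow_le_pow_left' (hle n) 2)
    · exact eLpNorm_condExp_sub_sq_add_sq (ℱ.le n) hY
  have hroot := ((ENNReal.continuous_rpow_const (y := ((2 : ℕ) : ℝ)⁻¹)).tendsto 0).comp hsq
  simpa only [Function.comp_def, ENNReal.pow_rpow_inv_natCast two_ne_zero,
    ENNReal.zero_rpow_of_pos (by positivity : (0 : ℝ) < ((2 : ℕ) : ℝ)⁻¹)] using hroot

end LevyL2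

theorem exists_mem_Ico_of_le_of_lt {α : Type*} [LinearOrder α] {p : ℕ → α} {K : ℕ} {s : α}
    (h0 : p 0 ≤ s) (hK : s < p K) : ∃ i < K, s ∈ Ico (p i) (p (i + 1)) := by
  classical
  have hex : ∃ j, s < p j := ⟨K, hK⟩
  obtain ⟨i, hi⟩ := Nat.exists_eq_succ_of_ne_zero fun h : Nat.find hex = 0 =>
    (h ▸ Nat.find_spec hex).not_ge h0
  refine ⟨i, ?_, not_lt.1 (Nat.find_min hex (by omega)), ?_⟩
  · have := Nat.find_min' hex hK
    omega
  · simpa only [hi] using Nat.find_spec hex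

section NaturalFiltration

variable {Ω : Type*} {X : ℝ → Ω → ℝ} {t : ℝ}

theorem measurable_naturalσlt {s : ℝ} (hs : s ∈ Ico 0 t) : Measurable[naturalσlt X t] (X s) :=
  measurable_iff_comap_le.2 <| le_iSup₂
    (f := fun s (_ : s ∈ Ico (0 : ℝ) t) => MeasurableSpace.comap (X s) inferInstance) s hs

theorem naturalσlt_le {m : MeasurableSpace Ω} (hX : ∀ s ∈ Ico 0 t, Measurable[m] (X s)) :
    naturalσlt X t ≤ m :=
  iSup₂_le fun s hs => measurable_iff_comap_le.1 (hX s hs)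

end NaturalFiltration

section Discretization

variable {Ω : Type*} {X Z : ℝ → Ω → ℝ} {p : ℕ → ℝ} {K : ℕ} {T : ℝ}

theorem exists_discretization_eq (h0 : p 0 = 0) (hK : p K = T) (hp : MonotoneOn p (Iic K))
    (hZ : ∀ i, i < K → ∀ s, p i ≤ s → s < p (i + 1) → ∀ ω, Z s ω = X (p i) ω)
    {s : ℝ} (hs : s ∈ Ico 0 T) :
    ∃ i < K, p i ∈ Icc 0 s ∧ s < p (i + 1) ∧ Z s = X (p i) := by
  obtain ⟨i, hiK, hpi, hsi⟩ := exists_mem_Ico_of_le_of_lt (p := p) (h0 ▸ hs.1) (hK ▸ hs.2)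
  refine ⟨i, hiK, ⟨?_, hpi⟩, hsi, funext (hZ i hiK s hpi hsi)⟩
  exact h0 ▸ hp (mem_Iic.2 (Nat.zero_le K)) (mem_Iic.2 hiK.le) (Nat.zero_le i)

theorem discretization_eq_of_mem_partition (hK : p K = T) (hp : StrictMonoOn p (Iic K))
    (hZ : ∀ i, i < K → ∀ s, p i ≤ s → s < p (i + 1) → ∀ ω, Z s ω = X (p i) ω)
    (hZT : ∀ ω, Z T ω = X T ω) {j : ℕ} (hj : j ≤ K) : Z (p j) = X (p j) := by
  rcases hj.lt_or_eq with hj | rfl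
  · exact funext <| hZ j hj _ le_rfl <| hp (mem_Iic.2 hj.le) (mem_Iic.2 hj) (Nat.lt_succ_self j)
  · rw [hK]
    exact funext hZT

theorem naturalσlt_discretization_le (h0 : p 0 = 0) (hK : p K = T) (hp : MonotoneOn p (Iic K))
    (hZ : ∀ i, i < K → ∀ s, p i ≤ s → s < p (i + 1) → ∀ ω, Z s ω = X (p i) ω)
    {t : ℝ} (ht : t ≤ T) : naturalσlt Z t ≤ naturalσlt X t :=
  naturalσlt_le fun s hs => by
    obtain ⟨i, -, hpi, -, hZs⟩ := exists_discretization_eq h0 hK hp hZ ⟨hs.1, hs.2.trans_le ht⟩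
    rw [hZs]
    exact measurable_naturalσlt ⟨hpi.1, hpi.2.trans_lt hs.2⟩

theorem naturalσlt_discretization_le_of_refines {Z' : ℝ → Ω → ℝ} {q : ℕ → ℝ} {L : ℕ}
    (h0 : p 0 = 0) (hK : p K = T) (hp : MonotoneOn p (Iic K))
    (hZ : ∀ i, i < K → ∀ s, p i ≤ s → s < p (i + 1) → ∀ ω, Z s ω = X (p i) ω)
    (hL : q L = T) (hq : StrictMonoOn q (Iic L))
    (hZ' : ∀ i, i < L → ∀ s, q i ≤ s → s < q (i + 1) → ∀ ω, Z' s ω = X (q i) ω)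
    (hZ'T : ∀ ω, Z' T ω = X T ω) (hrefine : ∀ i ≤ K, ∃ j ≤ L, q j = p i)
    {t : ℝ} (ht : t ≤ T) : naturalσlt Z t ≤ naturalσlt Z' t :=
  naturalσlt_le fun s hs => by
    obtain ⟨i, hiK, hpi, -, hZs⟩ := exists_discretization_eq h0 hK hp hZ ⟨hs.1, hs.2.trans_le ht⟩
    obtain ⟨j, hjL, hqj⟩ := hrefine i hiK.le
    rw [hZs, ← hqj, ← discretization_eq_of_mem_partition hL hq hZ' hZ'T hjL, hqj]
    exact measurable_naturalσlt ⟨hpi.1, hpi.2.trans_lt hs.2⟩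

end Discretization

theorem tendsto_partition_endpoints {k : ℕ → ℕ} {tpt : ℕ → ℕ → ℝ}
    (hmesh : ∀ ε > 0, ∃ N, ∀ n ≥ N, ∀ i < k n, tpt n (i + 1) - tpt n i < ε)
    {s : ℝ} {i : ℕ → ℕ} (hi : ∀ n, i n < k n) (hle : ∀ n, tpt n (i n) ≤ s)
    (hlt : ∀ n, s < tpt n (i n + 1)) :
    Tendsto (fun n => tpt n (i n)) atTop (𝓝[≤] s) ∧
      Tendsto (fun n => tpt n (i n + 1)) atTop (𝓝[>] s) := by
  have hgap : ∀ ε > 0, ∀ᶠ n in atTop, tpt n (i n + 1) - tpt n (i n) < ε := fun ε hε =>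
    let ⟨N, hN⟩ := hmesh ε hε
    eventually_atTop.2 ⟨N, fun n hn => hN n hn (i n) (hi n)⟩
  refine ⟨tendsto_nhdsWithin_iff.2 ⟨?_, .of_forall hle⟩,
    tendsto_nhdsWithin_iff.2 ⟨?_, .of_forall hlt⟩⟩ <;>
  refine Metric.tendsto_nhds.2 fun ε hε => (hgap ε hε).mono fun n hn => ?_ <;>
  rw [Real.dist_eq, abs_lt] <;> constructor <;> linarith [hle n, hlt n]

section DiscretizationSequence

variable {Ω : Type*} {X : ℝ → Ω → ℝ} {Xn : ℕ → ℝ → Ω → ℝ} {k : ℕ → ℕ} {tpt : ℕ → ℕ → ℝ}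
  {T : ℝ}

theorem ae_tendsto_discretization {mΩ : MeasurableSpace Ω} {μ : Measure Ω}
    (hnojump : ∀ t, 0 < t →
      ∀ᵐ ω ∂μ, Tendsto (fun s => X s ω) (𝓝[<] t) (𝓝 (X t ω)))
    (h0 : ∀ n, tpt n 0 = 0) (hTend : ∀ n, tpt n (k n) = T)
    (hmono : ∀ n, MonotoneOn (tpt n) (Iic (k n)))
    (hmesh : ∀ ε > 0, ∃ N, ∀ n ≥ N, ∀ i < k n, tpt n (i + 1) - tpt n i < ε)
    (hXn : ∀ n i, i < k n → ∀ s, tpt n i ≤ s → s < tpt n (i + 1) →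
      ∀ ω, Xn n s ω = X (tpt n i) ω)
    (hXnT : ∀ n ω, Xn n T ω = X T ω) {s : ℝ} (hs : s ∈ Ioc 0 T) :
    ∀ᵐ ω ∂μ, Tendsto (fun n => Xn n s ω) atTop (𝓝 (X s ω)) := by
  rcases hs.2.lt_or_eq with hsT | rfl
  · choose i hi hpi hsi hXs using fun n =>
      exists_discretization_eq (h0 n) (hTend n) (hmono n) (hXn n) ⟨hs.1.le, hsT⟩
    have hleft := (tendsto_partition_endpoints hmesh hi (fun n => (hpi n).2) hsi).1
    filter_upwards [hnojump s hs.1] with ω hω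
    have hω' : ContinuousWithinAt (X · ω) (Iic s) s := continuousWithinAt_Iio_iff_Iic.1 hω
    exact (hω'.tendsto.comp hleft).congr fun n => (congrFun (hXs n) ω).symm
  · exact .of_forall fun ω => by simp only [hXnT, tendsto_const_nhds]

theorem naturalσlt_le_iSup_discretization
    (hXrc : ∀ ω t, ContinuousWithinAt (fun s => X s ω) (Ici t) t)
    (h0 : ∀ n, tpt n 0 = 0) (hTend : ∀ n, tpt n (k n) = T)
    (hptmono : ∀ n, StrictMonoOn (tpt n) (Iic (k n)))
    (hmesh : ∀ ε > 0, ∃ N, ∀ n ≥ N, ∀ i < k n, tpt n (i + 1) - tpt n i < ε)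
    (hXn : ∀ n i, i < k n → ∀ s, tpt n i ≤ s → s < tpt n (i + 1) →
      ∀ ω, Xn n s ω = X (tpt n i) ω)
    (hXnT : ∀ n ω, Xn n T ω = X T ω) {t : ℝ} (ht : t ≤ T) :
    naturalσlt X t ≤ ⨆ n, naturalσlt (Xn n) t :=
  naturalσlt_le fun s hs => by
    choose i hi hpi hsi _ using fun n => exists_discretization_eq (h0 n) (hTend n)
      (hptmono n).monotoneOn (hXn n) ⟨hs.1, hs.2.trans_le ht⟩
    set u := fun n => tpt n (i n + 1)
    have hu : Tendsto u atTop (𝓝[>] s) :=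
      (tendsto_partition_endpoints hmesh hi (fun n => (hpi n).2) hsi).2
    obtain ⟨N, hN⟩ :=
      eventually_atTop.1 ((tendsto_nhdsWithin_iff.1 hu).1.eventually (gt_mem_nhds hs.2))
    have hmeas : ∀ n, Measurable[⨆ n, naturalσlt (Xn n) t] (X (u (n + N))) := fun n => by
      rw [← discretization_eq_of_mem_partition (hTend _) (hptmono _) (hXn _) (hXnT _) (hi _)]
      exact (measurable_naturalσlt ⟨hs.1.trans (hsi _).le, hN _ (Nat.le_add_left N n)⟩).mono
        (le_iSup (fun n => naturalσlt (Xn n) t) (n + N)) le_rfl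
    let : MeasurableSpace Ω := ⨆ n, naturalσlt (Xn n) t
    refine measurable_of_tendsto_metrizable hmeas (tendsto_pi_nhds.2 fun ω => ?_)
    exact ((hXrc ω s).mono Ioi_subset_Ici_self).tendsto.comp ((tendsto_add_atTop_iff_nat N).2 hu)

end DiscretizationSequence

theorem stmt15_general {Ω : Type*} {mΩ : MeasurableSpace Ω} (μ : Measure Ω) [IsProbabilityMeasure μ]
    (T : ℝ)
    (X : ℝ → Ω → ℝ) (hXmeas : ∀ s, Measurable (X s))
    -- càdlàg paths
    (hXrc : ∀ ω t, ContinuousWithinAt (fun s => X s ω) (Set.Ici t) t)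
    -- no fixed time of discontinuity: `ℙ(ΔX_t ≠ 0) = 0` for each `t`
    (hnojump : ∀ t, 0 < t →
      ∀ᵐ ω ∂μ, Tendsto (fun s => X s ω) (nhdsWithin t (Set.Iio t)) (nhds (X t ω)))
    -- the refining subdivisions `πⁿ = (tpt n 0 < ... < tpt n (k n))` of `[0,T]`
    (k : ℕ → ℕ) (tpt : ℕ → ℕ → ℝ)
    (h0 : ∀ n, tpt n 0 = 0) (hTend : ∀ n, tpt n (k n) = T)
    (hptmono : ∀ n, StrictMonoOn (tpt n) (Set.Iic (k n)))
    (hrefine : ∀ n i, i ≤ k n → ∃ j ≤ k (n + 1), tpt (n + 1) j = tpt n i)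
    (hmesh : ∀ ε > 0, ∃ N, ∀ n ≥ N, ∀ i < k n, tpt n (i + 1) - tpt n i < ε)
    -- the discretized processes `Xⁿ`
    (Xn : ℕ → ℝ → Ω → ℝ)
    (hXn : ∀ n i, i < k n → ∀ s, tpt n i ≤ s → s < tpt n (i + 1) →
      ∀ ω, Xn n s ω = X (tpt n i) ω)
    (hXnT : ∀ n ω, Xn n T ω = X T ω) :
    -- (1) almost sure convergence at each fixed time
    (∀ s ∈ Set.Ioc 0 T, ∀ᵐ ω ∂μ, Tendsto (fun n => Xn n s ω) atTop (nhds (X s ω))) ∧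
    -- (2) convergence of the natural filtrations `ℋⁿ_{t⁻} → ℋ_{t⁻}` in `L²`
    (∀ t ∈ Set.Ioc 0 T, ∀ Y : Ω → ℝ, StronglyMeasurable[naturalσlt X t] Y → MemLp Y 2 μ →
      Tendsto (fun n => eLpNorm ((μ[Y | naturalσlt (Xn n) t]) - Y) 2 μ) atTop (nhds 0)) := by
  refine ⟨fun s hs => ae_tendsto_discretization hnojump h0 hTend (fun n => (hptmono n).monotoneOn)
    hmesh hXn hXnT hs, fun t ht Y hYm hY => ?_⟩
  have hle : ∀ n, naturalσlt (Xn n) t ≤ naturalσlt X t := fun n =>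
    naturalσlt_discretization_le (h0 n) (hTend n) (hptmono n).monotoneOn (hXn n) ht.2
  let ℋ : Filtration ℕ mΩ :=
    { seq := fun n => naturalσlt (Xn n) t
      mono' := monotone_nat_of_le_succ fun n =>
        naturalσlt_discretization_le_of_refines (h0 n) (hTend n) (hptmono n).monotoneOn (hXn n)
          (hTend (n + 1)) (hptmono (n + 1)) (hXn (n + 1)) (hXnT (n + 1)) (hrefine n) ht.2
      le' := fun n => (hle n).trans (naturalσlt_le fun s _ => hXmeas s) }
  exact tendsto_eLpNorm_two_condExp_sub ℋ
    (hYm.mono (naturalσlt_le_iSup_discretization hXrc h0 hTend hptmono hmesh hXn hXnT ht.2)) hY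

/-- Let `X` be càdlàg with `ℙ(ΔX_t ≠ 0) = 0` for every fixed `t`, and
`Xⁿ` its discretization along a refining sequence of subdivisions of `[0,T]` with mesh
tending to `0`. Then `Xⁿ_s → X_{s⁻} = X_s` a.s. for each fixed `s`, and the natural
filtrations satisfy `ℋⁿ_{t⁻} → ℋ_{t⁻}` in `L²` (`X` is of class `𝕏`). -/
theorem stmt15 {Ω : Type*} {mΩ : MeasurableSpace Ω} (μ : Measure Ω) [IsProbabilityMeasure μ]
    (T : ℝ) (hT : 0 < T)
    (X : ℝ → Ω → ℝ) (hXmeas : ∀ s, Measurable (X s))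
    -- càdlàg paths
    (hXrc : ∀ ω t, ContinuousWithinAt (fun s => X s ω) (Set.Ici t) t)
    (hXll : ∀ ω t, 0 < t → ∃ l : ℝ, Tendsto (fun s => X s ω) (nhdsWithin t (Set.Iio t)) (nhds l))
    -- no fixed time of discontinuity: `ℙ(ΔX_t ≠ 0) = 0` for each `t`
    (hnojump : ∀ t, 0 < t →
      ∀ᵐ ω ∂μ, Tendsto (fun s => X s ω) (nhdsWithin t (Set.Iio t)) (nhds (X t ω)))
    -- the refining subdivisions `πⁿ = (tpt n 0 < ... < tpt n (k n))` of `[0,T]`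
    (k : ℕ → ℕ) (tpt : ℕ → ℕ → ℝ)
    (hk : ∀ n, 0 < k n)
    (h0 : ∀ n, tpt n 0 = 0) (hTend : ∀ n, tpt n (k n) = T)
    (hptmono : ∀ n, StrictMonoOn (tpt n) (Set.Iic (k n)))
    (hrefine : ∀ n i, i ≤ k n → ∃ j ≤ k (n + 1), tpt (n + 1) j = tpt n i)
    (hmesh : ∀ ε > 0, ∃ N, ∀ n ≥ N, ∀ i < k n, tpt n (i + 1) - tpt n i < ε)
    -- the discretized processes `Xⁿ`
    (Xn : ℕ → ℝ → Ω → ℝ)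
    (hXn : ∀ n i, i < k n → ∀ s, tpt n i ≤ s → s < tpt n (i + 1) →
      ∀ ω, Xn n s ω = X (tpt n i) ω)
    (hXnT : ∀ n ω, Xn n T ω = X T ω) :
    -- (1) almost sure convergence at each fixed time
    (∀ s ∈ Set.Ioc 0 T, ∀ᵐ ω ∂μ, Tendsto (fun n => Xn n s ω) atTop (nhds (X s ω))) ∧
    -- (2) convergence of the natural filtrations `ℋⁿ_{t⁻} → ℋ_{t⁻}` in `L²`
    (∀ t ∈ Set.Ioc 0 T, ∀ Y : Ω → ℝ, StronglyMeasurable[naturalσlt X t] Y → MemLp Y 2 μ →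
      Tendsto (fun n => eLpNorm ((μ[Y | naturalσlt (Xn n) t]) - Y) 2 μ) atTop (nhds 0)) :=
  stmt15_general (mΩ := mΩ) μ T X hXmeas hXrc hnojump k tpt h0 hTend hptmono hrefine hmesh Xn hXn
    hXnT
end
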